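/- arXiv:1201.4334 — 4 statements merged into one kernel-verified Lean document; each statement's English description precedes it below -/
import Mathlib

section
/- Let C be a binary self-dual code of length n (a subspace of F_2^n equal to its dual under the standard dot product) and let σ be an automorphism of C (a coordinate permutation preserving C) of odd prime order p, whose cycle decomposition consists of c cycles of length p and f = n - cp fixed points. Define F_σ(C) = {v ∈ C : σ(v) = v} and E_σ(C) = {v ∈ C : the restriction of v to each cycle and each fixed point has even weight}. Then C = F_σ(C) ⊕ E_σ(C) (internal direct sum of subspaces), dim F_σ(C) = (c+f)/2, and dim E_σ(C) = c(p-1)/2. -/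
/-!
For `p` odd, `T v = ∑_{k<p} v ∘ σ^k` is idempotent over `𝔽₂` (it fixes `σ`-invariant vectors
because `p ≡ 1 mod 2`) and maps `C` into itself, with image `F_σ(C)` and kernel `E_σ(C)` inside
`C`; hence `C = F_σ(C) ⊕ E_σ(C)`. A `σ`-invariant vector is the lift of a function on the orbits
of `σ`. All orbits have odd length, so lifting preserves dot products, and `T` is self-adjoint,
so lifts are orthogonal to `E_σ(C)`. Consequently the code on the orbits whose lifts lie in `C`
is self-dual and has dimension `#orbits / 2 = (c + f) / 2`; `E_σ(C)` takes the rest of `n / 2`.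
-/

open Finset

def wt {ι : Type*} [Fintype ι] (v : ι → ZMod 2) : ℕ :=
  (Finset.univ.filter fun i => v i ≠ 0).card

def dualCode {ι : Type*} [Fintype ι] (C : Submodule (ZMod 2) (ι → ZMod 2)) :
    Submodule (ZMod 2) (ι → ZMod 2) where
  carrier := {x | ∀ c ∈ C, ∑ i, x i * c i = 0}
  add_mem' := by
    intro a b ha hb c hc
    have := ha c hc; have := hb c hc
    simp only [Pi.add_apply, add_mul, Finset.sum_add_distrib]
    simp [ha c hc, hb c hc]
  zero_mem' := by intro c hc; simp
  smul_mem' := by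
    intro r a ha c hc
    simp only [Pi.smul_apply, smul_eq_mul, mul_assoc, ← Finset.mul_sum]
    simp [ha c hc]

/-- Fixed subcode F_σ(C). -/
def fixedCode {ι : Type*} (σ : Equiv.Perm ι) (C : Submodule (ZMod 2) (ι → ZMod 2)) :
    Submodule (ZMod 2) (ι → ZMod 2) where
  carrier := {v | v ∈ C ∧ v ∘ σ = v}
  add_mem' := by
    rintro a b ⟨ha, ha'⟩ ⟨hb, hb'⟩
    refine ⟨C.add_mem ha hb, ?_⟩
    funext i
    simpa using congrFun (congrArg₂ (· + ·) ha' hb') i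
  zero_mem' := ⟨C.zero_mem, rfl⟩
  smul_mem' := by
    rintro r a ⟨ha, ha'⟩
    exact ⟨C.smul_mem r ha, by funext i; simpa using congrArg (r • ·) (congrFun ha' i)⟩

/-- Subcode E_σ(C): codewords with even weight on each cycle (and zero on fixed points). -/
def evenCode {ι : Type*} (p : ℕ) (σ : Equiv.Perm ι) (C : Submodule (ZMod 2) (ι → ZMod 2)) :
    Submodule (ZMod 2) (ι → ZMod 2) where
  carrier := {v | v ∈ C ∧ ∀ i, ∑ k ∈ Finset.range p, v ((σ ^ k) i) = 0}
  add_mem' := by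
    rintro a b ⟨ha, ha'⟩ ⟨hb, hb'⟩
    refine ⟨C.add_mem ha hb, fun i => ?_⟩
    simp [Finset.sum_add_distrib, ha' i, hb' i]
  zero_mem' := ⟨C.zero_mem, by simp⟩
  smul_mem' := by
    rintro r a ⟨ha, ha'⟩
    refine ⟨C.smul_mem r ha, fun i => ?_⟩
    simp only [Pi.smul_apply, smul_eq_mul]
    rw [← Finset.mul_sum, ha' i, mul_zero]

open Module Equiv Function

section DualCode
variable {ι : Type*} [Fintype ι]

lemma mem_dualCode_iff {C : Submodule (ZMod 2) (ι → ZMod 2)} {x : ι → ZMod 2} :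
    x ∈ dualCode C ↔ ∀ c ∈ C, x ⬝ᵥ c = 0 :=
  Iff.rfl

lemma dualCode_eq_orthogonal (C : Submodule (ZMod 2) (ι → ZMod 2)) :
    dualCode C = LinearMap.BilinForm.orthogonal (dotProductBilin (ZMod 2) (ZMod 2)) C := by
  ext x
  refine forall₂_congr fun c _ => ?_
  change x ⬝ᵥ c = 0 ↔ c ⬝ᵥ x = 0
  rw [dotProduct_comm]

lemma finrank_add_finrank_dualCode (C : Submodule (ZMod 2) (ι → ZMod 2)) :
    finrank (ZMod 2) C + finrank (ZMod 2) (dualCode C) = Fintype.card ι := by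
  have hker : LinearMap.ker (dotProductBilin (ZMod 2) (ZMod 2) : (ι → ZMod 2) →ₗ[ZMod 2] _) = ⊥ :=
    LinearMap.ker_eq_bot'.2 fun v hv => dotProduct_eq_zero v fun w => LinearMap.congr_fun hv w
  rw [dualCode_eq_orthogonal, LinearMap.BilinForm.finrank_add_finrank_orthogonal', hker,
    inf_bot_eq, finrank_bot, add_zero, finrank_fintype_fun_eq_card]

lemma two_mul_finrank_of_eq_dualCode {C : Submodule (ZMod 2) (ι → ZMod 2)}
    (hC : C = dualCode C) : 2 * finrank (ZMod 2) C = Fintype.card ι := by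
  have := finrank_add_finrank_dualCode C
  rw [← hC] at this
  omega

end DualCode

lemma Odd.nsmul_zmod_two {p : ℕ} (hp : Odd p) (x : ZMod 2) : p • x = x := by
  rw [nsmul_eq_mul, hp.natCast_zmod_two, one_mul]

lemma comp_perm_pow_eq_self {ι α : Type*} {σ : Perm ι} {v : ι → α} (hv : v ∘ σ = v) (k : ℕ) :
    v ∘ ⇑(σ ^ k) = v := by
  induction k with
  | zero => rfl
  | succ k ih => rw [pow_succ, Perm.coe_mul, ← comp_assoc, ih, hv]

section OrbitSum
variable {ι : Type*} (σ : Perm ι) (p : ℕ)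

def orbitSum : (ι → ZMod 2) →ₗ[ZMod 2] (ι → ZMod 2) :=
  ∑ k ∈ range p, LinearMap.funLeft (ZMod 2) (ZMod 2) ⇑(σ ^ k)

lemma orbitSum_eq_sum_comp (v : ι → ZMod 2) :
    orbitSum σ p v = ∑ k ∈ range p, v ∘ ⇑(σ ^ k) :=
  LinearMap.sum_apply _ _ _

lemma orbitSum_apply (v : ι → ZMod 2) (i : ι) :
    orbitSum σ p v i = ∑ k ∈ range p, v ((σ ^ k) i) := by
  simp [orbitSum_eq_sum_comp]

variable {σ p}

lemma mem_evenCode_iff {C : Submodule (ZMod 2) (ι → ZMod 2)} {v : ι → ZMod 2} :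
    v ∈ evenCode p σ C ↔ v ∈ C ∧ orbitSum σ p v = 0 := by
  simp only [funext_iff, orbitSum_apply, Pi.zero_apply]
  rfl

lemma orbitSum_eq_self (hp : Odd p) {v : ι → ZMod 2} (hv : v ∘ σ = v) : orbitSum σ p v = v := by
  ext i
  simp_rw [orbitSum_apply, ← comp_apply (f := v), comp_perm_pow_eq_self hv, sum_const, card_range,
    hp.nsmul_zmod_two]

lemma orbitSum_comp_perm (hσ : σ ^ p = 1) (v : ι → ZMod 2) :
    orbitSum σ p v ∘ σ = orbitSum σ p v := by
  ext i
  have hshift := (sum_range_succ' (fun k => v ((σ ^ k) i)) p).symm.trans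
    (sum_range_succ (fun k => v ((σ ^ k) i)) p)
  rw [hσ, pow_zero] at hshift
  simpa only [comp_apply, orbitSum_apply, ← Perm.mul_apply, ← pow_succ] using
    add_right_cancel hshift

lemma orbitSum_mem {C : Submodule (ZMod 2) (ι → ZMod 2)} (hC : ∀ v ∈ C, v ∘ σ ∈ C)
    {v : ι → ZMod 2} (hv : v ∈ C) : orbitSum σ p v ∈ C := by
  have hpow : ∀ k : ℕ, v ∘ ⇑(σ ^ k) ∈ C := by
    intro k
    induction k with
    | zero => exact hv
    | succ k ih => simpa only [pow_succ, Perm.coe_mul, ← comp_assoc] using hC _ ih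
  rw [orbitSum_eq_sum_comp]
  exact C.sum_mem fun k _ => hpow k

lemma disjoint_fixedCode_evenCode (hp : Odd p) (C : Submodule (ZMod 2) (ι → ZMod 2)) :
    Disjoint (fixedCode σ C) (evenCode p σ C) := by
  rw [Submodule.disjoint_def]
  intro v hvF hvE
  rw [← orbitSum_eq_self hp hvF.2]
  exact (mem_evenCode_iff.1 hvE).2

lemma fixedCode_sup_evenCode (hσ : σ ^ p = 1) (hp : Odd p) {C : Submodule (ZMod 2) (ι → ZMod 2)}
    (hC : ∀ v ∈ C, v ∘ σ ∈ C) : fixedCode σ C ⊔ evenCode p σ C = C := by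
  refine le_antisymm (sup_le (fun v hv => hv.1) (fun v hv => hv.1)) fun v hv => ?_
  have hTv : orbitSum σ p v ∈ fixedCode σ C := ⟨orbitSum_mem hC hv, orbitSum_comp_perm hσ v⟩
  have hrest : v - orbitSum σ p v ∈ evenCode p σ C := by
    refine mem_evenCode_iff.2 ⟨C.sub_mem hv hTv.1, ?_⟩
    rw [map_sub, orbitSum_eq_self hp hTv.2, sub_self]
  simpa using Submodule.add_mem_sup hTv hrest

lemma dotProduct_orbitSum [Fintype ι] (hp : Odd p) {u : ι → ZMod 2} (hu : u ∘ σ = u)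
    (v : ι → ZMod 2) : u ⬝ᵥ orbitSum σ p v = u ⬝ᵥ v := by
  have hk : ∀ k : ℕ, u ⬝ᵥ v ∘ ⇑(σ ^ k) = u ⬝ᵥ v := fun k => by
    conv_lhs => rw [← comp_perm_pow_eq_self hu k]
    exact comp_equiv_dotProduct_comp_equiv _ _ _
  simp only [orbitSum_eq_sum_comp, dotProduct_sum, hk, sum_const, card_range, hp.nsmul_zmod_two]

end OrbitSum

lemma sum_inv_card_fiber_eq_card {ι κ : Type*} [Fintype ι] [Fintype κ] [DecidableEq κ]
    {g : ι → κ} (hg : Surjective g) :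
    ∑ i, ((#{j | g j = g i} : ℕ) : ℚ)⁻¹ = Fintype.card κ := by
  rw [← sum_fiberwise univ g, Fintype.card_eq_sum_ones, Nat.cast_sum, Nat.cast_one]
  refine sum_congr rfl fun q _ => ?_
  obtain ⟨i, rfl⟩ := hg q
  have hne : (#{j | g j = g i} : ℚ) ≠ 0 := Nat.cast_ne_zero.2 (card_ne_zero.2 ⟨i, by simp⟩)
  rw [sum_congr rfl fun j hj => by rw [(mem_filter.1 hj).2], sum_const, nsmul_eq_mul,
    mul_inv_cancel₀ hne]

section Orbits
variable {ι : Type*} (σ : Perm ι)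

abbrev Orbits := Quotient (Perm.SameCycle.setoid σ)

noncomputable instance [Finite ι] : Fintype (Orbits σ) := Fintype.ofFinite _

instance [Fintype ι] [DecidableEq ι] : DecidableEq (Orbits σ) :=
  @Quotient.decidableEq _ _ fun a b => inferInstanceAs (Decidable (σ.SameCycle a b))

def orbitLift : (Orbits σ → ZMod 2) →ₗ[ZMod 2] (ι → ZMod 2) :=
  LinearMap.funLeft (ZMod 2) (ZMod 2) (Quotient.mk _)

lemma orbitLift_injective : Injective (orbitLift σ) :=
  LinearMap.funLeft_injective_of_surjective _ _ _ Quotient.mk_surjective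

variable {σ}

lemma mem_range_orbitLift_iff [Finite ι] {v : ι → ZMod 2} :
    v ∈ LinearMap.range (orbitLift σ) ↔ v ∘ σ = v := by
  constructor
  · rintro ⟨w, rfl⟩
    funext i
    exact congrArg w (Quotient.sound (Perm.sameCycle_apply_left.2 (Perm.SameCycle.refl σ i)))
  · intro hv
    refine ⟨Quotient.lift v fun i j (hij : σ.SameCycle i j) => ?_, rfl⟩
    obtain ⟨k, rfl⟩ := hij.exists_nat_pow_eq
    exact (congrFun (comp_perm_pow_eq_self hv k) i).symm

lemma map_comap_orbitLift [Finite ι] (C : Submodule (ZMod 2) (ι → ZMod 2)) :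
    (C.comap (orbitLift σ)).map (orbitLift σ) = fixedCode σ C := by
  ext v
  rw [Submodule.map_comap_eq, Submodule.mem_inf, mem_range_orbitLift_iff, and_comm]
  rfl

variable [Fintype ι] [DecidableEq ι]

lemma filter_mk_eq_mk (i : ι) :
    ({j | (⟦j⟧ : Orbits σ) = ⟦i⟧} : Finset ι) = ({j | σ.SameCycle j i} : Finset ι) := by
  ext j
  simp only [mem_filter, mem_univ, true_and]
  exact Quotient.eq

lemma filter_sameCycle_of_apply_eq {i : ι} (hi : σ i = i) :
    ({j | σ.SameCycle j i} : Finset ι) = {i} := by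
  ext j
  simp only [mem_filter, mem_univ, true_and, mem_singleton]
  exact ⟨fun h => (h.symm.eq_of_left hi).symm, fun h => h ▸ Perm.SameCycle.refl σ j⟩

lemma filter_sameCycle_of_apply_ne {i : ι} (hi : σ i ≠ i) :
    ({j | σ.SameCycle j i} : Finset ι) = (σ.cycleOf i).support := by
  ext j
  rw [Perm.mem_support_cycleOf_iff' hi, mem_filter, Perm.sameCycle_comm]
  exact and_iff_right (mem_univ j)

lemma card_filter_sameCycle_dvd_orderOf (i : ι) : #{j | σ.SameCycle j i} ∣ orderOf σ := by
  by_cases hi : σ i = i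
  · simp [filter_sameCycle_of_apply_eq hi]
  · rw [filter_sameCycle_of_apply_ne hi, ← (σ.isCycle_cycleOf hi).orderOf]
    exact σ.orderOf_cycleOf_dvd_orderOf i

lemma card_filter_sameCycle_of_apply_ne (hp : (orderOf σ).Prime) {i : ι} (hi : σ i ≠ i) :
    #{j | σ.SameCycle j i} = orderOf σ := by
  refine (hp.eq_one_or_self_of_dvd _ (card_filter_sameCycle_dvd_orderOf i)).resolve_left ?_
  rw [filter_sameCycle_of_apply_ne hi]
  have := Perm.two_le_card_support_cycleOf_iff.2 hi
  omega

lemma dotProduct_orbitLift {p : ℕ} (hσ : σ ^ p = 1) (hp : Odd p) (w w' : Orbits σ → ZMod 2) :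
    orbitLift σ w ⬝ᵥ orbitLift σ w' = w ⬝ᵥ w' := by
  rw [dotProduct, ← sum_fiberwise univ (Quotient.mk _ : ι → Orbits σ)]
  refine sum_congr rfl fun q _ => ?_
  obtain ⟨i, rfl⟩ := Quotient.mk_surjective q
  have hodd : Odd #{j | σ.SameCycle j i} :=
    hp.of_dvd_nat ((card_filter_sameCycle_dvd_orderOf i).trans (orderOf_dvd_of_pow_eq_one hσ))
  rw [sum_congr rfl fun j hj => by rw [orbitLift, LinearMap.funLeft_apply, LinearMap.funLeft_apply,
    (mem_filter.1 hj).2], sum_const, filter_mk_eq_mk, hodd.nsmul_zmod_two]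

lemma card_orbits_of_orderOf_eq_prime {p c : ℕ} (hp : p.Prime) (hord : orderOf σ = p)
    (hn : Fintype.card ι = c * p + #{i | σ i = i}) :
    Fintype.card (Orbits σ) = c + #{i | σ i = i} := by
  have hmoved : #{i | ¬σ i = i} = c * p := by
    have := card_filter_add_card_filter_not (s := univ) (fun i => σ i = i)
    rw [card_univ] at this
    omega
  have hinv : ∀ i, ((#{j | σ.SameCycle j i} : ℕ) : ℚ)⁻¹ = if σ i = i then 1 else (p : ℚ)⁻¹ := by
    intro i
    split_ifs with hi
    · simp [filter_sameCycle_of_apply_eq hi]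
    · rw [card_filter_sameCycle_of_apply_ne (hord ▸ hp) hi, hord]
  -- each orbit `O` contributes `|O| · |O|⁻¹ = 1` to `∑ᵢ |orbit i|⁻¹`
  have hq := sum_inv_card_fiber_eq_card
    (Quotient.mk_surjective : Surjective (Quotient.mk _ : ι → Orbits σ))
  simp only [filter_mk_eq_mk, hinv, sum_ite, sum_const, nsmul_eq_mul, hmoved] at hq
  have hp0 : (p : ℚ) ≠ 0 := Nat.cast_ne_zero.2 hp.ne_zero
  rw [Nat.cast_mul, mul_assoc, mul_inv_cancel₀ hp0, mul_one, mul_one] at hq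
  exact_mod_cast hq.symm.trans (add_comm _ _)

end Orbits

section OrbitCode
variable {ι : Type*} [Fintype ι] [DecidableEq ι] {σ : Perm ι} {p : ℕ}
  {C : Submodule (ZMod 2) (ι → ZMod 2)}

lemma comap_orbitLift_eq_dualCode (hσ : σ ^ p = 1) (hp : Odd p) (hC : ∀ v ∈ C, v ∘ σ ∈ C)
    (hself : C = dualCode C) : C.comap (orbitLift σ) = dualCode (C.comap (orbitLift σ)) := by
  ext w
  rw [Submodule.mem_comap, mem_dualCode_iff]
  constructor
  · intro hw w' hw'
    rw [← dotProduct_orbitLift hσ hp]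
    exact mem_dualCode_iff.1 (hself ▸ hw) _ hw'
  · intro hw
    rw [hself, mem_dualCode_iff]
    intro c hc
    rw [← fixedCode_sup_evenCode hσ hp hC] at hc
    obtain ⟨u, hu, e, he, rfl⟩ := Submodule.mem_sup.1 hc
    obtain ⟨w', rfl⟩ := mem_range_orbitLift_iff.2 hu.2
    have hfix : orbitLift σ w ∘ σ = orbitLift σ w := mem_range_orbitLift_iff.1 ⟨w, rfl⟩
    rw [dotProduct_add, dotProduct_orbitLift hσ hp, hw w' hu.1, ← dotProduct_orbitSum hp hfix,
      (mem_evenCode_iff.1 he).2, dotProduct_zero, add_zero]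

lemma two_mul_finrank_fixedCode (hσ : σ ^ p = 1) (hp : Odd p) (hC : ∀ v ∈ C, v ∘ σ ∈ C)
    (hself : C = dualCode C) :
    2 * finrank (ZMod 2) (fixedCode σ C) = Fintype.card (Orbits σ) := by
  rw [← map_comap_orbitLift,
    (Submodule.equivMapOfInjective _ (orbitLift_injective σ) _).finrank_eq.symm]
  exact two_mul_finrank_of_eq_dualCode (comap_orbitLift_eq_dualCode hσ hp hC hself)

end OrbitCode

/-- If a binary self-dual code `C` of length `n` has an automorphism `σ` of odd prime
order `p` with `c` cycles of length `p` and `f = n - c*p` fixed points, then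
`C = F_σ(C) ⊕ E_σ(C)`, with `dim F_σ(C) = (c+f)/2` and `dim E_σ(C) = c(p-1)/2`. -/
theorem statement0 {n p c f : ℕ} (hp : p.Prime) (hodd : Odd p)
    (C : Submodule (ZMod 2) (Fin n → ZMod 2))
    (hself : C = dualCode C)
    (σ : Equiv.Perm (Fin n))
    (haut : ∀ v, v ∈ C ↔ v ∘ σ ∈ C)
    (hord : orderOf σ = p)
    (hfix : (Finset.univ.filter fun i => σ i = i).card = f)
    (hn : n = c * p + f) :
    Disjoint (fixedCode σ C) (evenCode p σ C) ∧
    fixedCode σ C ⊔ evenCode p σ C = C ∧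
    Module.finrank (ZMod 2) (fixedCode σ C) = (c + f) / 2 ∧
    Module.finrank (ZMod 2) (evenCode p σ C) = c * (p - 1) / 2 := by
  have hσ : σ ^ p = 1 := hord ▸ pow_orderOf_eq_one σ
  have hC : ∀ v ∈ C, v ∘ σ ∈ C := fun v => (haut v).1
  have hdisj : Disjoint (fixedCode σ C) (evenCode p σ C) := disjoint_fixedCode_evenCode hodd C
  have hsup : fixedCode σ C ⊔ evenCode p σ C = C := fixedCode_sup_evenCode hσ hodd hC
  have hF := two_mul_finrank_fixedCode hσ hodd hC hself
  rw [card_orbits_of_orderOf_eq_prime hp hord (by rw [Fintype.card_fin, hfix, hn]), hfix] at hF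
  have hdimC := two_mul_finrank_of_eq_dualCode hself
  rw [Fintype.card_fin] at hdimC
  have hFE := Submodule.finrank_sup_add_finrank_inf_eq (fixedCode σ C) (evenCode p σ C)
  rw [hsup, disjoint_iff.1 hdisj, finrank_bot] at hFE
  have hcp : c * (p - 1) + c = c * p := by
    rw [← Nat.mul_add_one, Nat.sub_add_cancel hp.one_le]
  refine ⟨hdisj, hsup, ?_, ?_⟩ <;> omega
end

section
/- There is no binary self-dual [48,24,10] code C possessing an automorphism σ of order 47 whose cycle structure consists of one 47-cycle and one fixed point, given that the number of weight-10 codewords of C is either 704 or 768. (Proof idea: the fixed subcode F_σ(C) would be the binary repetition code {0, all-ones vector} of length 48, which has no word of weight 10, yet the number of weight-10 words of C must be congruent to the number of weight-10 words of F_σ(C) modulo 47, and neither 704 nor 768 is divisible by 47.) -/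
open Finset

lemma perm_dvd_card {α : Type*} [Finite α] {p : ℕ} [hp : Fact p.Prime]
    (g : Equiv.Perm α) (hg : g ^ p = 1) (hfx : ∀ x, g x ≠ x) : p ∣ Nat.card α := by
  cases isEmpty_or_nonempty α with
  | inl h => simp [Nat.card_of_isEmpty]
  | inr h =>
    have hgo : orderOf g = p := by
      rcases (Nat.Prime.eq_one_or_self_of_dvd hp.out _ (orderOf_dvd_of_pow_eq_one hg)) with h1 | h1
      · exfalso
        have : g = 1 := orderOf_eq_one_iff.mp h1
        obtain ⟨x⟩ := h
        exact hfx x (by simp [this])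
      · exact h1
    have hpG : IsPGroup p (Subgroup.zpowers g) :=
      IsPGroup.of_card (n := 1) (by rw [Nat.card_zpowers, hgo, pow_one])
    have hmod := hpG.card_modEq_card_fixedPoints α
    have : IsEmpty (MulAction.fixedPoints (Subgroup.zpowers g) α) := by
      constructor
      rintro ⟨x, hx⟩
      exact hfx x (hx ⟨g, Subgroup.mem_zpowers g⟩)
    have h0 : Nat.card (MulAction.fixedPoints (Subgroup.zpowers g) α) = 0 :=
      Nat.card_of_isEmpty
    rw [h0] at hmod
    exact (Nat.modEq_zero_iff_dvd).mp hmod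

lemma wt_comp_perm {ι : Type*} [Fintype ι] [DecidableEq ι] (v : ι → ZMod 2) (e : Equiv.Perm ι) :
    wt (v ∘ e) = wt v := by
  classical
  unfold wt
  apply Finset.card_equiv e
  intro i
  simp [Function.comp]

/-- There is no binary self-dual [48,24,10] code (whose number of weight-10 words is
704 or 768) with an automorphism of order 47 having one 47-cycle and one fixed point. -/
theorem statement2
    (C : Submodule (ZMod 2) (Fin 48 → ZMod 2))
    (hself : C = dualCode C)
    (hdim : Module.finrank (ZMod 2) C = 24)
    (hmin : ∀ v ∈ C, v ≠ 0 → 10 ≤ wt v)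
    (hA10 : Set.ncard {v | v ∈ C ∧ wt v = 10} = 704 ∨
            Set.ncard {v | v ∈ C ∧ wt v = 10} = 768)
    (σ : Equiv.Perm (Fin 48))
    (haut : ∀ v, v ∈ C ↔ v ∘ σ ∈ C)
    (hord : orderOf σ = 47)
    (hfix : (Finset.univ.filter fun i => σ i = i).card = 1) :
    False := by
  classical
  haveI : Fact (Nat.Prime 47) := ⟨by norm_num⟩
  have hσ47 : σ ^ 47 = 1 := by rw [← hord]; exact pow_orderOf_eq_one σ
  have hmem : ∀ v : Fin 48 → ZMod 2, v ∈ C → v ∘ ⇑σ ∈ C := fun v hv => (haut v).mp hv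
  have hmem' : ∀ v : Fin 48 → ZMod 2, v ∈ C → v ∘ ⇑σ⁻¹ ∈ C := by
    intro v hv
    apply (haut _).mpr
    have : (v ∘ ⇑σ⁻¹) ∘ ⇑σ = v := by funext i; simp [Function.comp]
    rw [this]; exact hv
  set S := {v : Fin 48 → ZMod 2 | v ∈ C ∧ wt v = 10} with hSdef
  let g : Equiv.Perm S :=
    { toFun := fun x => ⟨x.1 ∘ ⇑σ, hmem x.1 x.2.1, by rw [wt_comp_perm]; exact x.2.2⟩
      invFun := fun x => ⟨x.1 ∘ ⇑σ⁻¹, hmem' x.1 x.2.1, by rw [wt_comp_perm]; exact x.2.2⟩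
      left_inv := fun x => Subtype.ext (by funext i; simp [Function.comp])
      right_inv := fun x => Subtype.ext (by funext i; simp [Function.comp]) }
  have hpow : ∀ (n : ℕ) (x : S), ((g ^ n) x).1 = x.1 ∘ ⇑(σ ^ n) := by
    intro n
    induction n with
    | zero => intro x; simp
    | succ n ih =>
      intro x
      rw [pow_succ g n, pow_succ' σ n]
      have : (g ^ n * g) x = (g ^ n) (g x) := rfl
      rw [this, ih (g x)]
      funext i
      simp [g, Function.comp]
  have hg47 : g ^ 47 = 1 := by
    apply Equiv.ext
    intro x
    apply Subtype.ext
    have := hpow 47 x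
    rw [hσ47] at this
    simpa using this
  have hnofix : ∀ x : S, g x ≠ x := by
    intro x hx
    have hc : ∀ i, x.1 (σ i) = x.1 i := by
      intro i
      have := congrArg Subtype.val hx
      exact congrFun this i
    have hck : ∀ (k : ℕ) (i : Fin 48), x.1 ((σ ^ k) i) = x.1 i := by
      intro k
      induction k with
      | zero => intro i; simp
      | succ k ih =>
        intro i
        rw [pow_succ' σ k]
        have : (σ * σ ^ k) i = σ ((σ ^ k) i) := rfl
        rw [this, hc, ih]
    set A : Finset (Fin 48) := Finset.univ.filter (fun i => x.1 i ≠ 0) with hA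
    have hcardA : A.card = 10 := x.2.2
    -- find a non-fixed point in A
    have : ∃ i ∈ A, σ i ≠ i := by
      by_contra hcon
      push_neg at hcon
      have hsub : A ⊆ Finset.univ.filter (fun i => σ i = i) := by
        intro i hi
        simp only [Finset.mem_filter, Finset.mem_univ, true_and]
        exact hcon i hi
      have := Finset.card_le_card hsub
      rw [hcardA, hfix] at this
      omega
    obtain ⟨i, hiA, hi⟩ := this
    -- minimal period of i is 47
    have hper : Function.IsPeriodicPt ⇑σ 47 i := by
      show (⇑σ)^[47] i = i
      rw [Equiv.Perm.iterate_eq_pow, hσ47]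
      rfl
    have hmp : Function.minimalPeriod ⇑σ i = 47 := by
      rcases (Nat.Prime.eq_one_or_self_of_dvd (by norm_num : Nat.Prime 47) _
        hper.minimalPeriod_dvd) with h1 | h1
      · exact absurd (Function.minimalPeriod_eq_one_iff_isFixedPt.mp h1) hi
      · exact h1
    -- 47 distinct points in A
    have hinj : Set.InjOn (fun k => (σ ^ k) i) (Finset.range 47) := by
      have key : ∀ a b : ℕ, a ≤ b → b < 47 → (σ ^ a) i = (σ ^ b) i → a = b := by
        intro a b hab hb heq
        by_contra hne
        have hlt : 0 < b - a := by omega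
        have hsplit : σ ^ b = σ ^ a * σ ^ (b - a) := by
          rw [← pow_add]; congr 1; omega
        rw [hsplit] at heq
        have : (σ ^ a) ((σ ^ (b - a)) i) = (σ ^ a) i := heq.symm
        have hfixba : (σ ^ (b - a)) i = i := (σ ^ a).injective this
        have hperba : Function.IsPeriodicPt ⇑σ (b - a) i := by
          show (⇑σ)^[b - a] i = i
          rw [Equiv.Perm.iterate_eq_pow]
          exact hfixba
        have := hperba.minimalPeriod_le hlt
        rw [hmp] at this
        omega
      intro a ha b hb heq
      simp only [Finset.coe_range, Set.mem_Iio] at ha hb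
      rcases le_total a b with h | h
      · exact key a b h hb heq
      · exact (key b a h ha heq.symm).symm
    have hmaps : ∀ k ∈ Finset.range 47, (σ ^ k) i ∈ A := by
      intro k _
      simp only [hA, Finset.mem_filter, Finset.mem_univ, true_and]
      rw [hck k i]
      simpa [hA, Finset.mem_filter] using hiA
    have h47 : 47 ≤ A.card := by
      calc 47 = (Finset.range 47).card := (Finset.card_range 47).symm
        _ ≤ A.card := Finset.card_le_card_of_injOn _ hmaps hinj
    omega
  have hdvd : 47 ∣ Nat.card S := perm_dvd_card g hg47 hnofix
  have hncard : Nat.card S = Set.ncard {v | v ∈ C ∧ wt v = 10} := Nat.card_coe_set_eq _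
  rw [hncard] at hdvd
  rcases hA10 with h | h <;> rw [h] at hdvd <;> omega
end

section
/- Let p be an odd prime and let P be the set of polynomials of even weight in F_2[x]/(x^p - 1), i.e., the ideal generated by x - 1 (equivalently, the classes of polynomials with an even number of nonzero coefficients). If 2 is a primitive root modulo p, then P is a finite field with 2^(p-1) elements. -/
/-!
Over `𝔽₂` we have `X ^ p - 1 = (X - 1) * Φ_p`, and the two factors are coprime because `p` is odd
(`2` is invertible modulo `p`). By the Chinese remainder theorem the ideal generated by `X - 1` in
`𝔽₂[X]/(X ^ p - 1)` is therefore carried bijectively, additively and multiplicatively onto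
`𝔽₂[X]/(Φ_p)`. Every irreducible factor of `Φ_p` over `𝔽₂` has degree the order of `2` modulo `p`;
when this order is `p - 1 = deg Φ_p`, the polynomial `Φ_p` is irreducible and `𝔽₂[X]/(Φ_p)` is the
field with `2 ^ (p - 1)` elements.
-/

open Polynomial

/-- The ring F_2[x]/(x^p - 1). -/
abbrev Rp (p : ℕ) : Type :=
  Polynomial (ZMod 2) ⧸ Ideal.span {(Polynomial.X : Polynomial (ZMod 2)) ^ p - 1}

/-- The quotient map F_2[x] → F_2[x]/(x^p - 1). -/
noncomputable def mkp (p : ℕ) : Polynomial (ZMod 2) →+* Rp p := Ideal.Quotient.mk _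

/-- The ideal P of even-weight elements of F_2[x]/(x^p-1), generated by x - 1. -/
noncomputable def evenIdeal (p : ℕ) : Ideal (Rp p) :=
  Ideal.span {mkp p (Polynomial.X - 1)}

/-- Multiplication on (the subtype of) an ideal of a commutative ring. -/
noncomputable instance idealMul {R : Type*} [CommRing R] (I : Ideal R) : Mul I :=
  ⟨fun a b => ⟨a.1 * b.1, I.mul_mem_left a.1 b.2⟩⟩

namespace ZMod

theorem coprime_of_orderOf_natCast_ne_zero {ℓ n : ℕ} (h : orderOf (ℓ : ZMod n) ≠ 0) :
    ℓ.Coprime n :=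
  (isUnit_iff_coprime ℓ n).mp (orderOf_ne_zero_iff.mp h).isUnit

theorem irreducible_cyclotomic_of_orderOf_natCast_eq_totient {ℓ n : ℕ} [Fact ℓ.Prime]
    (hn : n ≠ 0) (h : orderOf (ℓ : ZMod n) = n.totient) :
    Irreducible (cyclotomic n (ZMod ℓ)) := by
  have hcop := coprime_of_orderOf_natCast_ne_zero (h ▸ (Nat.totient_pos.mpr hn.bot_lt).ne')
  refine irreducible_of_dvd_cyclotomic_of_natDegree
    ((Nat.Prime.coprime_iff_not_dvd Fact.out).mp hcop) dvd_rfl ?_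
  rw [natDegree_cyclotomic, ← orderOf_units, coe_unitOfCoprime, h]

end ZMod

theorem Polynomial.isCoprime_cyclotomic_prime_X_sub_one {K : Type*} [Field K] {p : ℕ}
    [Fact p.Prime] (hp : (p : K) ≠ 0) : IsCoprime (cyclotomic p K) (X - 1) := by
  refine Separable.isCoprime ?_
  rw [cyclotomic_prime_mul_X_sub_one, ← C_1]
  exact separable_X_pow_sub_C 1 hp one_ne_zero

namespace Ideal

variable {R : Type*} [CommRing R] {f g h : R}

theorem exists_equiv_span_quotient_of_isCoprime (hfg : f * g = h) (hcop : IsCoprime f g) :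
    ∃ e : span {Quotient.mk (span {h}) f} ≃ R ⧸ span {g},
      (∀ a b, e (a + b) = e a + e b) ∧ (∀ a b, e (a * b) = e a * e b) := by
  subst hfg
  let φ := Quotient.factor (span_singleton_le_span_singleton.mpr (dvd_mul_left g f))
  have hker : ∀ y ∈ span {Quotient.mk (span {f * g}) f}, φ y = 0 → y = 0 := by
    intro y hy hy0
    obtain ⟨s, rfl⟩ := mem_span_singleton'.mp hy
    obtain ⟨s, rfl⟩ := Quotient.mk_surjective s
    rw [← map_mul] at hy0 ⊢
    have hgs : g ∣ s * f := mem_span_singleton.mp (Quotient.eq_zero_iff_mem.mp hy0)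
    rw [Quotient.eq_zero_iff_mem, mem_span_singleton, mul_comm s]
    exact mul_dvd_mul_left f (hcop.symm.dvd_of_dvd_mul_right hgs)
  have hbij : Function.Bijective fun y : span {Quotient.mk (span {f * g}) f} => φ y := by
    refine ⟨fun a b hab => Subtype.ext <| sub_eq_zero.mp <|
      hker _ (sub_mem a.2 b.2) (by rw [map_sub]; exact sub_eq_zero.mpr hab), fun z => ?_⟩
    obtain ⟨z, rfl⟩ := Quotient.mk_surjective z
    obtain ⟨u, v, huv⟩ := hcop
    refine ⟨⟨Quotient.mk _ (z * u * f),
      mem_span_singleton'.mpr ⟨Quotient.mk _ (z * u), (map_mul _ _ _).symm⟩⟩, ?_⟩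
    show Quotient.mk _ (z * u * f) = Quotient.mk _ z
    rw [Quotient.mk_eq_mk_iff_sub_mem, mem_span_singleton]
    exact ⟨-(z * v), by linear_combination z * huv⟩
  exact ⟨Equiv.ofBijective _ hbij, fun a b => map_add φ a.1 b.1, fun a b => map_mul φ a.1 b.1⟩

end Ideal

theorem statement4_general {p : ℕ} (hp : p.Prime)
    (hprim : orderOf (2 : ZMod p) = p - 1) :
    ∃ e : evenIdeal p ≃ GaloisField 2 (p - 1),
      (∀ a b, e (a + b) = e a + e b) ∧ (∀ a b, e (a * b) = e a * e b) := by
  have := Fact.mk hp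
  have hord : orderOf ((2 : ℕ) : ZMod p) = p.totient := by
    rwa [Nat.totient_prime hp, Nat.cast_ofNat]
  have hirr := ZMod.irreducible_cyclotomic_of_orderOf_natCast_eq_totient hp.ne_zero hord
  have hp_odd : (p : ZMod 2) ≠ 0 := by
    rw [Ne, ZMod.natCast_eq_zero_iff, ← Nat.prime_two.coprime_iff_not_dvd]
    exact ZMod.coprime_of_orderOf_natCast_ne_zero (hord ▸ (Nat.totient_pos.mpr hp.pos).ne')
  obtain ⟨e₁, hadd, hmul⟩ := Ideal.exists_equiv_span_quotient_of_isCoprime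
    ((mul_comm _ _).trans (cyclotomic_prime_mul_X_sub_one (ZMod 2) p))
    (isCoprime_cyclotomic_prime_X_sub_one hp_odd).symm
  have := Fact.mk hirr
  have hcard : Nat.card (AdjoinRoot (cyclotomic p (ZMod 2))) = 2 ^ (p - 1) := by
    let b := AdjoinRoot.powerBasis hirr.ne_zero
    have := b.finite
    rw [Module.natCard_eq_pow_finrank (K := ZMod 2), Nat.card_zmod, b.finrank,
      AdjoinRoot.powerBasis_dim, natDegree_cyclotomic, Nat.totient_prime hp]
  let e₂ := GaloisField.algEquivGaloisField 2 (p - 1) hcard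
  exact ⟨e₁.trans e₂.toEquiv, fun a b => (congrArg e₂ (hadd a b)).trans (map_add e₂ _ _),
    fun a b => (congrArg e₂ (hmul a b)).trans (map_mul e₂ _ _)⟩

/-- If `p` is an odd prime and 2 is a primitive root modulo `p`, then the ideal `P`
of even-weight elements of F_2[x]/(x^p - 1) is (with its induced addition and
multiplication) a finite field with `2^(p-1)` elements. -/
theorem statement4 {p : ℕ} (hp : p.Prime) (hodd : Odd p)
    (hprim : orderOf (2 : ZMod p) = p - 1) :
    ∃ e : evenIdeal p ≃ GaloisField 2 (p - 1),
      (∀ a b, e (a + b) = e a + e b) ∧ (∀ a b, e (a * b) = e a * e b) :=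
  statement4_general hp hprim
end

section
/- Let C ⊆ F_2^n be a binary code invariant under the permutation σ with c p-cycles and f fixed points (p odd prime), and suppose C is self-dual. Then for every two vectors u, v in C_φ = φ(E_σ(C)^*) ⊆ P^c, one has Σ_{i=1}^c u_i(x)·v_i(x^{-1}) = 0 in F_2[x]/(x^p - 1). -/
open Finset

/-- Coordinate index set for an automorphism of type p-(c,f): `c` cycles of
length `p` followed by `f` fixed points. -/
abbrev Idx (p c f : ℕ) : Type := (Fin c × Fin p) ⊕ Fin f

/-- The standard permutation with `c` cycles of length `p` and `f` fixed points. -/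
def stdPerm (p c f : ℕ) : Equiv.Perm (Idx p c f) :=
  Equiv.sumCongr (Equiv.prodCongr (Equiv.refl (Fin c)) (finRotate p)) (Equiv.refl (Fin f))

/-- The projection π recording one bit per cycle and the fixed-point bits. -/
def proj (p c f : ℕ) [NeZero p] :
    (Idx p c f → ZMod 2) →ₗ[ZMod 2] ((Fin c ⊕ Fin f) → ZMod 2) where
  toFun v := Sum.elim (fun j => v (Sum.inl (j, 0))) (fun l => v (Sum.inr l))
  map_add' := by intro a b; funext i; cases i <;> simp
  map_smul' := by intro r a; funext i; cases i <;> simp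

open Polynomial

/-! The coefficient of `x ^ m` in `Σ_j u_j(x) w_j(x⁻¹)` is the inner product of `w` with the
`σ ^ m`-shift of `u`, up to the fixed-point coordinates, where `u` vanishes because `p` is odd.
The shift stays in `C` by `σ`-invariance, so self-orthogonality kills every coefficient. -/

open Fin.NatCast

theorem pow_val_add_add_sub_one_mul {M : Type*} [Monoid M] {p : ℕ} [NeZero p] {ξ : M}
    (hξ : ξ ^ p = 1) (k m : Fin p) :
    ξ ^ (((k + m : Fin p) : ℕ) + (p - 1) * k) = ξ ^ (m : ℕ) := by
  obtain ⟨q, rfl⟩ := Nat.exists_eq_add_one_of_ne_zero (NeZero.ne p)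
  rw [pow_eq_pow_mod _ hξ, Fin.val_add, Nat.mod_add_mod, Nat.add_sub_cancel,
    show (k : ℕ) + m + q * k = m + (q + 1) * k by ring, Nat.add_mul_mod_self_left,
    Nat.mod_eq_of_lt m.isLt]

/-- With `ξ ^ p = 1`, the coefficients of `a(ξ) · b(ξ⁻¹)` are the cyclic correlations of `a`
and `b`; here `ξ⁻¹ = ξ ^ (p - 1)`. -/
theorem sum_smul_pow_mul_sum_smul_pow_sub_one_mul {K R : Type*} [CommSemiring K] [Semiring R]
    [Algebra K R] {p : ℕ} [NeZero p] {ξ : R} (hξ : ξ ^ p = 1) (a b : Fin p → K) :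
    (∑ k : Fin p, a k • ξ ^ (k : ℕ)) * (∑ k : Fin p, b k • ξ ^ ((p - 1) * (k : ℕ))) =
      ∑ m : Fin p, (∑ k : Fin p, a (k + m) * b k) • ξ ^ (m : ℕ) := by
  calc (∑ k : Fin p, a k • ξ ^ (k : ℕ)) * (∑ k : Fin p, b k • ξ ^ ((p - 1) * (k : ℕ)))
      = ∑ k : Fin p, ∑ m : Fin p,
          (a (k + m) • ξ ^ ((k + m : Fin p) : ℕ)) * (b k • ξ ^ ((p - 1) * (k : ℕ))) := by
        rw [Finset.sum_mul_sum, Finset.sum_comm]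
        exact Finset.sum_congr rfl fun k _ =>
          (Equiv.sum_comp (Equiv.addLeft k) fun i => _ * (b k • ξ ^ ((p - 1) * (k : ℕ)))).symm
    _ = ∑ m : Fin p, ∑ k : Fin p, (a (k + m) * b k) • ξ ^ (m : ℕ) := by
        rw [Finset.sum_comm]
        refine Finset.sum_congr rfl fun m _ => Finset.sum_congr rfl fun k _ => ?_
        rw [smul_mul_smul_comm, ← pow_add, pow_val_add_add_sub_one_mul hξ]
    _ = ∑ m : Fin p, (∑ k : Fin p, a (k + m) * b k) • ξ ^ (m : ℕ) := by
        simp only [Finset.sum_smul]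

theorem mkp_X_pow_self (p : ℕ) : mkp p X ^ p = 1 := by
  rw [← map_pow, ← sub_eq_zero, ← map_one (mkp p), ← map_sub]
  exact Ideal.Quotient.eq_zero_iff_mem.mpr (Ideal.subset_span rfl)

section Code

variable {ι : Type*} {C : Submodule (ZMod 2) (ι → ZMod 2)} {σ : Equiv.Perm ι}

theorem comp_pow_mem (hσ : ∀ v ∈ C, v ∘ σ ∈ C) {v : ι → ZMod 2} (hv : v ∈ C) :
    ∀ m : ℕ, v ∘ ⇑(σ ^ m) ∈ C
  | 0 => hv
  | m + 1 => by
    rw [pow_succ, Equiv.Perm.coe_mul, ← Function.comp_assoc]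
    exact hσ _ (comp_pow_mem hσ hv m)

theorem sum_mul_comp_pow_eq_zero [Fintype ι] (hC : C ≤ dualCode C) (hσ : ∀ v ∈ C, v ∘ σ ∈ C)
    {u w : ι → ZMod 2} (hu : u ∈ C) (hw : w ∈ C) (m : ℕ) :
    ∑ i, w i * u ((σ ^ m) i) = 0 :=
  hC hw _ (comp_pow_mem hσ hu m)

/-- A fixed point of `σ` contributes `p` copies of its bit to the cycle sum, and `p` is odd. -/
theorem apply_eq_zero_of_mem_evenCode {p : ℕ} (hodd : Odd p) {v : ι → ZMod 2}
    (hv : v ∈ evenCode p σ C) {i : ι} (hi : σ i = i) : v i = 0 := by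
  have h := hv.2 i
  simp only [Equiv.Perm.pow_apply_eq_self_of_apply_eq_self hi, Finset.sum_const,
    Finset.card_range, nsmul_eq_mul, hodd.natCast_zmod_two, one_mul] at h
  exact h

end Code

section StdPerm

variable {p c f : ℕ}

theorem stdPerm_inr (l : Fin f) : stdPerm p c f (Sum.inr l) = Sum.inr l := rfl

theorem stdPerm_pow_inr (m : ℕ) (l : Fin f) : (stdPerm p c f ^ m) (Sum.inr l) = Sum.inr l :=
  Equiv.Perm.pow_apply_eq_self_of_apply_eq_self (stdPerm_inr l) m

theorem stdPerm_inl [NeZero p] (j : Fin c) (k : Fin p) :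
    stdPerm p c f (Sum.inl (j, k)) = Sum.inl (j, k + 1) := by
  simp [stdPerm]

theorem stdPerm_pow_inl [NeZero p] (m : ℕ) (j : Fin c) (k : Fin p) :
    (stdPerm p c f ^ m) (Sum.inl (j, k)) = Sum.inl (j, k + m) := by
  induction m generalizing k with
  | zero => simp
  | succ m ih =>
    rw [pow_succ, Equiv.Perm.mul_apply, stdPerm_inl, ih, Nat.cast_succ, add_comm (m : Fin p),
      add_assoc]

theorem sum_sum_mul_eq_zero_of_mem_evenCode [NeZero p] (hodd : Odd p)
    {C : Submodule (ZMod 2) (Idx p c f → ZMod 2)} (hC : C ≤ dualCode C)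
    (hσ : ∀ v ∈ C, v ∘ stdPerm p c f ∈ C) {u w : Idx p c f → ZMod 2}
    (hu : u ∈ evenCode p (stdPerm p c f) C) (hw : w ∈ C) (m : Fin p) :
    ∑ j : Fin c, ∑ k : Fin p, u (Sum.inl (j, k + m)) * w (Sum.inl (j, k)) = 0 := by
  have h := sum_mul_comp_pow_eq_zero hC hσ hu.1 hw m
  simp only [Fintype.sum_sum_type, Fintype.sum_prod_type, stdPerm_pow_inl, stdPerm_pow_inr,
    apply_eq_zero_of_mem_evenCode hodd hu (stdPerm_inr _), mul_zero, Finset.sum_const_zero,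
    add_zero, Fin.cast_val_eq_self] at h
  simpa only [mul_comm] using h

end StdPerm

theorem statement12_general {p c f : ℕ} [NeZero p] (hodd : Odd p)
    (C : Submodule (ZMod 2) (Idx p c f → ZMod 2))
    (hself : C = dualCode C)
    (haut : ∀ v, v ∈ C ↔ v ∘ (stdPerm p c f) ∈ C) :
    ∀ u ∈ evenCode p (stdPerm p c f) C, ∀ w ∈ evenCode p (stdPerm p c f) C,
      ∑ j : Fin c,
        (∑ k : Fin p, u (Sum.inl (j, k)) • (mkp p X) ^ (k : ℕ)) *
        (∑ k : Fin p, w (Sum.inl (j, k)) • (mkp p X) ^ ((p - 1) * (k : ℕ))) = 0 := by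
  intro u hu w hw
  simp only [sum_smul_pow_mul_sum_smul_pow_sub_one_mul (mkp_X_pow_self p)]
  rw [Finset.sum_comm]
  refine Finset.sum_eq_zero fun m _ => ?_
  rw [← Finset.sum_smul, sum_sum_mul_eq_zero_of_mem_evenCode hodd hself.le
    (fun v => (haut v).mp) hu hw.1, zero_smul]

/-- If `C` is self-dual and invariant under the standard permutation of type p-(c,f),
then for any two codewords `u, w` of `E_σ(C)`, writing `u_j(x), w_j(x) ∈ P` for their
cycle blocks, one has `Σ_j u_j(x)·w_j(x⁻¹) = 0` in F_2[x]/(x^p - 1). -/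
theorem statement12 {p c f : ℕ} [NeZero p] (hp : p.Prime) (hodd : Odd p)
    (C : Submodule (ZMod 2) (Idx p c f → ZMod 2))
    (hself : C = dualCode C)
    (haut : ∀ v, v ∈ C ↔ v ∘ (stdPerm p c f) ∈ C) :
    ∀ u ∈ evenCode p (stdPerm p c f) C, ∀ w ∈ evenCode p (stdPerm p c f) C,
      ∑ j : Fin c,
        (∑ k : Fin p, u (Sum.inl (j, k)) • (mkp p X) ^ (k : ℕ)) *
        (∑ k : Fin p, w (Sum.inl (j, k)) • (mkp p X) ^ ((p - 1) * (k : ℕ))) = 0 :=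
  statement12_general hodd C hself haut
end
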